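/- Let V be a D(ℝ)-submodule of D(ℝ)^(n) and let S and S′ both be s-bases of V. Then S′ is obtained from S by multiplying by tangible scalars: there is a bijection σ : S → S′ such that for each s ∈ S there is a tangible α_s ∈ T with σ(s) = α_s · s. -/

import Mathlib

noncomputable section

/-- The extended tropical semifield `D(ℝ)`: `bot` is `-∞`; `nb g r` is the element of
underlying value `r : ℝ`, ghost if `g = true`, tangible if `g = false`. -/
inductive DR : Type where
  | bot : DR
  | nb : Bool → ℝ → DR

namespace DR

/-- Supertropical addition on `D(ℝ)`. -/
def add : DR → DR → DR
  | bot, y => y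
  | x, bot => x
  | nb b r, nb c s => if r < s then nb c s else if s < r then nb b r else nb true r

/-- Supertropical multiplication on `D(ℝ)`. -/
def mul : DR → DR → DR
  | bot, _ => bot
  | _, bot => bot
  | nb b r, nb c s => nb (b || c) (r + s)

theorem bot_add (x : DR) : add bot x = x := by cases x <;> rfl

theorem add_bot (x : DR) : add x bot = x := by cases x <;> rfl

theorem bot_mul (x : DR) : mul bot x = bot := by cases x <;> rfl

theorem mul_bot (x : DR) : mul x bot = bot := by cases x <;> rfl

theorem add_comm' (x y : DR) : add x y = add y x := by
  cases x <;> cases y <;> (try rfl)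
  simp only [add]
  split_ifs <;>
    first
      | rfl
      | (exfalso; linarith)
      | (congr 1 <;> first | rfl | linarith)

theorem add_assoc' (x y z : DR) : add (add x y) z = add x (add y z) := by
  cases x with
  | bot => rw [bot_add, bot_add]
  | nb b r =>
    cases y with
    | bot => rw [add_bot, bot_add]
    | nb c s =>
      cases z with
      | bot => rw [add_bot, add_bot]
      | nb d t =>
        simp only [add]
        split_ifs <;>
          simp only [add] <;>
          (try split_ifs) <;>
          first
            | rfl
            | (exfalso; linarith)
            | (congr 1 <;> first | rfl | linarith)

theorem mul_comm' (x y : DR) : mul x y = mul y x := by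
  cases x <;> cases y <;> (try rfl)
  simp [mul, Bool.or_comm, add_comm]

theorem mul_assoc' (x y z : DR) : mul (mul x y) z = mul x (mul y z) := by
  cases x <;> cases y <;> cases z <;> (try rfl) <;>
    simp [mul, Bool.or_assoc, add_assoc]

theorem one_mul' (x : DR) : mul (nb false 0) x = x := by
  cases x <;> simp [mul]

theorem left_distrib' (x y z : DR) : mul x (add y z) = add (mul x y) (mul x z) := by
  cases x with
  | bot => simp [bot_mul, bot_add]
  | nb b r =>
    cases y with
    | bot => simp [bot_add, mul_bot]
    | nb c s =>
      cases z with
      | bot => simp [add_bot, mul_bot]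
      | nb d t =>
        simp only [mul, add]
        split_ifs <;>
          simp only [mul, add, Bool.or_true, Bool.true_or] <;>
          (try split_ifs) <;>
          first
            | rfl
            | (exfalso; linarith)
            | (congr 1 <;> first | rfl | linarith)

theorem right_distrib' (x y z : DR) : mul (add x y) z = add (mul x z) (mul y z) := by
  rw [mul_comm' (add x y) z, left_distrib', mul_comm' z x, mul_comm' z y]

instance : Add DR := ⟨add⟩
instance : Zero DR := ⟨bot⟩
instance : Mul DR := ⟨mul⟩
instance : One DR := ⟨nb false 0⟩

instance : AddCommMonoid DR where
  add := add
  add_assoc := add_assoc'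
  zero := bot
  zero_add := bot_add
  add_zero := add_bot
  add_comm := add_comm'
  nsmul := nsmulRec

instance : CommMonoid DR where
  mul := mul
  mul_assoc := mul_assoc'
  one := nb false 0
  one_mul := one_mul'
  mul_one := fun x => by show mul x (nb false 0) = x; rw [mul_comm']; exact one_mul' x
  mul_comm := mul_comm'
  npow := npowRec

instance : CommSemiring DR where
  __ := (inferInstance : AddCommMonoid DR)
  __ := (inferInstance : CommMonoid DR)
  left_distrib := left_distrib'
  right_distrib := right_distrib'
  zero_mul := bot_mul
  mul_zero := mul_bot

/-- The ghost ideal `G₀ = ℝ^ν ∪ {-∞}` as a predicate. -/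
def IsGhost : DR → Prop
  | bot => True
  | nb b _ => b = true

/-- The tangible elements `T = ℝ` as a predicate. -/
def Tangible : DR → Prop
  | nb false _ => True
  | _ => False

/-- Membership in `T ∪ {-∞}`. -/
def TangibleOrBot (x : DR) : Prop := x = bot ∨ Tangible x

/-- The underlying value in `ℝ ∪ {-∞}`. -/
def val : DR → WithBot ℝ
  | bot => ⊥
  | nb _ r => (r : WithBot ℝ)

/-- `x ≤_ν y` : comparison of underlying values, `-∞` smallest. -/
def nuLe (x y : DR) : Prop := val x ≤ val y

/-- `x <_ν y` : strict comparison of underlying values, `-∞` smallest. -/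
def nuLt (x y : DR) : Prop := val x < val y

/-- The tangible lift `x̂` of `x` (with `hat bot = bot`). -/
def hat : DR → DR
  | bot => bot
  | nb _ r => nb false r

/-- The ghost map `ν`. -/
def nu : DR → DR
  | bot => bot
  | nb _ r => nb true r

/-- The ghost-surpass relation `x ⊨ y` on `D(ℝ)`. -/
def GhostSurp (x y : DR) : Prop := ∃ c : DR, IsGhost c ∧ x = y + c

end DR

open DR

/-- A vector in `D(ℝ)^(n)` lies in the ghost submodule `G₀^(n)`. -/
def GhostVec {n : ℕ} (v : Fin n → DR) : Prop := ∀ j, IsGhost (v j)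

/-- A tangible vector: all entries in `T ∪ {-∞}`. -/
def TangibleVec {n : ℕ} (v : Fin n → DR) : Prop := ∀ j, TangibleOrBot (v j)

/-- The ghost-surpass relation `v ⊨ w` on vectors. -/
def GhostSurpVec {n : ℕ} (v w : Fin n → DR) : Prop :=
  ∃ u : Fin n → DR, GhostVec u ∧ v = w + u

/-- A family of vectors is tropically dependent. -/
def TropDep {ι : Type*} [Fintype ι] {n : ℕ} (w : ι → Fin n → DR) : Prop :=
  ∃ I : Finset ι, I.Nonempty ∧ ∃ α : ι → DR, (∀ i ∈ I, Tangible (α i)) ∧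
    ∀ j : Fin n, IsGhost (∑ i ∈ I, α i * w i j)

/-- A family of vectors is tropically independent. -/
def TropIndep {ι : Type*} [Fintype ι] {n : ℕ} (w : ι → Fin n → DR) : Prop := ¬ TropDep w

/-- A set of vectors is tropically dependent. -/
def SetTropDep {n : ℕ} (S : Set (Fin n → DR)) : Prop :=
  ∃ I : Finset (Fin n → DR), ↑I ⊆ S ∧ I.Nonempty ∧
    ∃ α : (Fin n → DR) → DR, (∀ w ∈ I, Tangible (α w)) ∧
      ∀ j : Fin n, IsGhost (∑ w ∈ I, α w * w j)

/-- A set of vectors is tropically independent. -/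
def SetTropIndep {n : ℕ} (S : Set (Fin n → DR)) : Prop := ¬ SetTropDep S

/-- A d-base of `V`: a maximal tropically independent subset of `V`. -/
def IsDBase {n : ℕ} (V S : Set (Fin n → DR)) : Prop :=
  S ⊆ V ∧ SetTropIndep S ∧ ∀ S', S ⊆ S' → S' ⊆ V → SetTropIndep S' → S' = S

/-- The rank of `V`: the maximal number of elements of a d-base of `V`. -/
noncomputable def trank {n : ℕ} (V : Set (Fin n → DR)) : ℕ :=
  sSup {m | ∃ S, IsDBase V S ∧ S.Finite ∧ S.ncard = m}

/-- `v` is tropically spanned by `S`. -/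
def SpannedBy {n : ℕ} (S : Set (Fin n → DR)) (v : Fin n → DR) : Prop :=
  ∃ I : Finset (Fin n → DR), ↑I ⊆ S ∧ I.Nonempty ∧
    ∃ α : (Fin n → DR) → DR, (∀ w ∈ I, Tangible (α w)) ∧
      GhostSurpVec v (fun j => ∑ w ∈ I, α w * w j)

/-- The tropical determinant (permanent) of a square matrix over `D(ℝ)`. -/
noncomputable def tperm {k : ℕ} (A : Matrix (Fin k) (Fin k) DR) : DR :=
  ∑ π : Equiv.Perm (Fin k), ∏ i, A (π i) i

/-- `S` tropically spans `V`. -/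
def TropSpans {n : ℕ} (S V : Set (Fin n → DR)) : Prop := ∀ v ∈ V, SpannedBy S v

/-- An s-base of `V`: a minimal tropically spanning subset of `V`. -/
def IsSBase {n : ℕ} (V S : Set (Fin n → DR)) : Prop :=
  S ⊆ V ∧ TropSpans S V ∧ ∀ S' ⊂ S, ¬ TropSpans S' V

/-! The relation `⊨` is compatible with addition and scalar multiplication, so tropical spanning
is transitive as soon as the spanning set contains `0`, and every s-base does (`0` is spanned only
by `0`). Hence no nonzero `s` in an s-base `S` surpasses a combination of `S \ {s}`.

Given a second s-base `S'`, write `s ⊨ ∑ αᵥ • v` over `S'` and each `v ⊨ bᵥ • s + rᵥ` with `rᵥ` in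
the span of `S \ {s}`. Substituting, `s ⊨ (∑ αᵥ bᵥ) • s + ∑ αᵥ • rᵥ`, which forces
`∑ αᵥ bᵥ = 𝟙`; a tangible sum equals one of its terms, so `αᵥ bᵥ = 𝟙` for some `v`. Then
`s ⊨ αᵥ • v + …` and `αᵥ • v ⊨ s + …`, and since `x = y + z`, `y = x + w` imply `x = y` in `D(ℝ)`,
we get `v = bᵥ • s`. -/

namespace DR

@[simp] theorem zero_eq_bot : (0 : DR) = bot := rfl

theorem one_eq_nb : (1 : DR) = nb false 0 := rfl

theorem tangible_one : Tangible (1 : DR) := trivial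

@[simp] theorem bot_add_eq (x : DR) : bot + x = x := bot_add x

@[simp] theorem add_bot_eq (x : DR) : x + bot = x := add_bot x

theorem nb_add_nb (b c : Bool) (r s : ℝ) :
    nb b r + nb c s = if r < s then nb c s else if s < r then nb b r else nb true r := rfl

@[simp] theorem bot_mul_eq (x : DR) : bot * x = bot := bot_mul x

@[simp] theorem mul_bot_eq (x : DR) : x * bot = bot := mul_bot x

@[simp] theorem nb_mul_nb (b c : Bool) (r s : ℝ) : nb b r * nb c s = nb (b || c) (r + s) := rfl

theorem val_add (x y : DR) : val (x + y) = val x ⊔ val y := by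
  rcases x with _ | ⟨b, r⟩ <;> rcases y with _ | ⟨c, s⟩ <;>
    simp only [bot_add_eq, add_bot_eq, val, bot_sup_eq, sup_bot_eq]
  rw [nb_add_nb]
  split_ifs with h₁ h₂
  · simp [h₁.le]
  · simp [h₂.le]
  · simp [le_antisymm (not_lt.1 h₂) (not_lt.1 h₁)]

theorem tangible_or_isGhost (x : DR) : Tangible x ∨ IsGhost x := by
  rcases x with _ | ⟨_ | _, r⟩ <;> simp [Tangible, IsGhost]

theorem Tangible.not_isGhost {x : DR} (h : Tangible x) : ¬ IsGhost x := by
  rcases x with _ | ⟨_ | _, r⟩ <;> simp_all [Tangible, IsGhost]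

theorem Tangible.ne_zero {x : DR} (h : Tangible x) : x ≠ 0 := by
  rintro rfl
  exact h

theorem IsGhost.add {x y : DR} (hx : IsGhost x) (hy : IsGhost y) : IsGhost (x + y) := by
  rcases x with _ | ⟨b, r⟩
  · simpa using hy
  rcases y with _ | ⟨c, s⟩
  · simpa using hx
  rw [nb_add_nb]
  split_ifs <;> simp_all [IsGhost]

theorem IsGhost.mul_right {x : DR} (hx : IsGhost x) (y : DR) : IsGhost (x * y) := by
  rcases x with _ | ⟨b, r⟩ <;> rcases y with _ | ⟨c, s⟩ <;> simp_all [IsGhost]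

theorem IsGhost.mul_left {x : DR} (hx : IsGhost x) (y : DR) : IsGhost (y * x) :=
  mul_comm x y ▸ hx.mul_right y

theorem add_eq_left_of_isGhost {x y : DR} (hx : IsGhost x) (h : val y ≤ val x) : x + y = x := by
  rcases x with _ | ⟨b, r⟩ <;> rcases y with _ | ⟨c, s⟩ <;> simp_all [nb_add_nb, val, IsGhost]

theorem eq_of_val_eq {x y : DR} (hx : Tangible x) (hy : Tangible y) (h : val x = val y) :
    x = y := by
  rcases x with _ | ⟨_ | _, r⟩ <;> rcases y with _ | ⟨_ | _, s⟩ <;> simp_all [Tangible, val]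

theorem Tangible.add_eq_or {x y : DR} (h : Tangible (x + y)) : x + y = x ∨ x + y = y := by
  rcases x with _ | ⟨b, r⟩
  · simp
  rcases y with _ | ⟨c, s⟩
  · simp
  rw [nb_add_nb] at h ⊢
  split_ifs at h ⊢ <;> simp_all [Tangible]

theorem eq_one_of_mul_eq_self {c x : DR} (hx : Tangible x) (h : c * x = x) : c = 1 := by
  rcases x with _ | ⟨_ | _, r⟩ <;> rcases c with _ | ⟨_ | _, γ⟩ <;> simp_all [Tangible, one_eq_nb]

theorem tangible_of_mul_eq_one {a b : DR} (h : a * b = 1) : Tangible b := by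
  rcases a with _ | ⟨_ | _, r⟩ <;> rcases b with _ | ⟨_ | _, s⟩ <;> simp_all [Tangible, one_eq_nb]

instance : NoZeroDivisors DR where
  eq_zero_or_eq_zero_of_mul_eq_zero {a b} h := by
    rcases a with _ | ⟨_, r⟩ <;> rcases b with _ | ⟨_, s⟩ <;> simp_all

theorem le_val_add_left (x y : DR) : val x ≤ val (x + y) := by
  rw [val_add]; exact le_sup_left

theorem le_val_add_right (x y : DR) : val y ≤ val (x + y) := by
  rw [val_add]; exact le_sup_right

theorem eq_of_eq_add_of_eq_add {x y z w : DR} (h₁ : x = y + z) (h₂ : y = x + w) : x = y := by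
  have hval : val x = val y :=
    le_antisymm (h₂ ▸ le_val_add_left x w) (h₁ ▸ le_val_add_left y z)
  rcases tangible_or_isGhost x with hx | hx
  · rcases tangible_or_isGhost y with hy | hy
    · exact eq_of_val_eq hx hy hval
    · rw [h₁, add_eq_left_of_isGhost hy (hval ▸ h₁ ▸ le_val_add_right y z)]
  · rw [h₂, add_eq_left_of_isGhost hx (hval ▸ h₂ ▸ le_val_add_right x w)]

theorem GhostSurp.of_mul_add {c x y : DR} (hc : c ≠ 1) (h : GhostSurp x (c * x + y)) :
    GhostSurp x y := by
  obtain ⟨g, hg, hx⟩ := h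
  rcases tangible_or_isGhost x with ht | hgx
  · have h₁ : x = c * x + y := by
      rcases (hx ▸ ht).add_eq_or with h' | h'
      · exact hx.trans h'
      · exact absurd (hx.trans h' ▸ hg) ht.not_isGhost
    rcases (h₁ ▸ ht).add_eq_or with h' | h'
    · exact absurd (eq_one_of_mul_eq_self ht (h'.symm.trans h₁.symm)) hc
    · exact ⟨0, trivial, by rw [add_zero]; exact h₁.trans h'⟩
  · refine ⟨x, hgx, (add_comm y x ▸ add_eq_left_of_isGhost hgx ?_).symm⟩
    calc val y ≤ val (c * x + y) := le_val_add_right _ _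
      _ ≤ val (c * x + y + g) := le_val_add_left _ _
      _ = val x := by rw [← hx]

theorem exists_eq_of_sum_eq {ι : Type*} {I : Finset ι} {f : ι → DR} {t : DR} (ht : Tangible t)
    (h : ∑ i ∈ I, f i = t) : ∃ i ∈ I, f i = t := by
  classical
  induction I using Finset.induction_on with
  | empty => exact absurd h.symm ht.ne_zero
  | insert a I ha ih =>
    rw [Finset.sum_insert ha] at h
    rcases (h ▸ ht).add_eq_or with h' | h'
    · exact ⟨a, Finset.mem_insert_self a I, h'.symm.trans h⟩
    · obtain ⟨i, hi, hfi⟩ := ih (h' ▸ h)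
      exact ⟨i, Finset.mem_insert_of_mem hi, hfi⟩

end DR

section Vectors

variable {n : ℕ}

theorem smul_eq_zero_iff_right_of_ne_zero {c : DR} (hc : c ≠ 0) {v : Fin n → DR} :
    c • v = 0 ↔ v = 0 :=
  ⟨fun h => funext fun j => (mul_eq_zero.1 (congrFun h j)).resolve_left hc,
    fun h => by rw [h, smul_zero]⟩

def ghostSubmodule (n : ℕ) : Submodule DR (Fin n → DR) where
  carrier := {u | GhostVec u}
  add_mem' hu hv j := (hu j).add (hv j)
  zero_mem' _ := trivial
  smul_mem' c _ hu j := (hu j).mul_left c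

namespace GhostSurpVec

theorem refl (v : Fin n → DR) : GhostSurpVec v v :=
  ⟨0, (ghostSubmodule n).zero_mem, (add_zero v).symm⟩

theorem trans {u v w : Fin n → DR} (h₁ : GhostSurpVec u v) (h₂ : GhostSurpVec v w) :
    GhostSurpVec u w := by
  obtain ⟨a, ha, rfl⟩ := h₁
  obtain ⟨b, hb, rfl⟩ := h₂
  exact ⟨b + a, (ghostSubmodule n).add_mem hb ha, add_assoc w b a⟩

theorem add {v v' w w' : Fin n → DR} (h : GhostSurpVec v w) (h' : GhostSurpVec v' w') :
    GhostSurpVec (v + v') (w + w') := by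
  obtain ⟨a, ha, rfl⟩ := h
  obtain ⟨b, hb, rfl⟩ := h'
  exact ⟨a + b, (ghostSubmodule n).add_mem ha hb, add_add_add_comm w a w' b⟩

theorem smul {v w : Fin n → DR} (h : GhostSurpVec v w) (c : DR) :
    GhostSurpVec (c • v) (c • w) := by
  obtain ⟨a, ha, rfl⟩ := h
  exact ⟨c • a, (ghostSubmodule n).smul_mem c ha, smul_add c w a⟩

theorem sum {ι : Type*} {I : Finset ι} {f g : ι → Fin n → DR}
    (h : ∀ i ∈ I, GhostSurpVec (f i) (g i)) : GhostSurpVec (∑ i ∈ I, f i) (∑ i ∈ I, g i) := by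
  classical
  induction I using Finset.induction_on with
  | empty => exact refl 0
  | insert a I ha ih =>
    rw [Finset.sum_insert ha, Finset.sum_insert ha]
    exact (h a (Finset.mem_insert_self a I)).add
      (ih fun i hi => h i (Finset.mem_insert_of_mem hi))

theorem antisymm {x y z w : Fin n → DR} (h₁ : GhostSurpVec x (y + z))
    (h₂ : GhostSurpVec y (x + w)) : x = y := by
  obtain ⟨a, -, ha⟩ := h₁
  obtain ⟨b, -, hb⟩ := h₂
  funext j
  exact DR.eq_of_eq_add_of_eq_add (z := z j + a j) (w := w j + b j)
    (by simp [ha, add_assoc]) (by simp [hb, add_assoc])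

theorem of_smul_add {c : DR} {s r : Fin n → DR} (hc : c ≠ 1) (h : GhostSurpVec s (c • s + r)) :
    GhostSurpVec s r := by
  obtain ⟨u, hu, hs⟩ := h
  have hj : ∀ j, GhostSurp (s j) (r j) := fun j =>
    GhostSurp.of_mul_add hc ⟨u j, hu j, congrFun hs j⟩
  choose g hg hsg using hj
  exact ⟨g, hg, funext hsg⟩

end GhostSurpVec

open Submodule

theorem spannedBy_iff {S : Set (Fin n → DR)} {v : Fin n → DR} :
    SpannedBy S v ↔ ∃ I : Finset (Fin n → DR), ↑I ⊆ S ∧ I.Nonempty ∧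
      ∃ α : (Fin n → DR) → DR, (∀ w ∈ I, Tangible (α w)) ∧
        GhostSurpVec v (∑ w ∈ I, α w • w) := by
  have (I : Finset (Fin n → DR)) (α : (Fin n → DR) → DR) :
      (∑ w ∈ I, α w • w) = fun j => ∑ w ∈ I, α w * w j := by
    ext j; simp [Finset.sum_apply]
  simp only [SpannedBy, this]

theorem SpannedBy.exists_surp_mem_span {S : Set (Fin n → DR)} {v : Fin n → DR}
    (h : SpannedBy S v) : ∃ y ∈ span DR S, GhostSurpVec v y := by
  obtain ⟨I, hIS, -, α, -, hv⟩ := spannedBy_iff.1 h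
  exact ⟨_, sum_mem fun w hw => smul_mem _ (α w) (subset_span (hIS hw)), hv⟩

theorem spannedBy_or_ghostVec_of_surp {S : Set (Fin n → DR)} {v y : Fin n → DR}
    (hy : y ∈ span DR S) (h : GhostSurpVec v y) : SpannedBy S v ∨ GhostVec v := by
  classical
  obtain ⟨c, K, hKS, -, rfl⟩ := mem_span_iff_exists_finset_subset.1 hy
  obtain ⟨u, hu, rfl⟩ := h
  have hghost : ∑ t ∈ K.filter (fun t => ¬ Tangible (c t)), c t • t ∈ ghostSubmodule n :=
    sum_mem fun t ht j => ((DR.tangible_or_isGhost (c t)).resolve_left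
      (Finset.mem_filter.1 ht).2).mul_right (t j)
  rw [← Finset.sum_filter_add_sum_filter_not K fun t => Tangible (c t), add_assoc]
  rcases (K.filter fun t => Tangible (c t)).eq_empty_or_nonempty with hK₁ | hK₁
  · right
    rw [hK₁, Finset.sum_empty, zero_add]
    exact (ghostSubmodule n).add_mem hghost hu
  · left
    refine spannedBy_iff.2 ⟨_, fun t ht => hKS (Finset.mem_filter.1 ht).1, hK₁, c,
      fun t ht => (Finset.mem_filter.1 ht).2, _, (ghostSubmodule n).add_mem hghost hu, rfl⟩

theorem spannedBy_of_ghostVec {S : Set (Fin n → DR)} {v : Fin n → DR}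
    (h0 : (0 : Fin n → DR) ∈ S) (hv : GhostVec v) : SpannedBy S v :=
  spannedBy_iff.2 ⟨{0}, by simpa using h0, Finset.singleton_nonempty 0, fun _ => 1,
    fun _ _ => DR.tangible_one, v, hv, by simp⟩

theorem spannedBy_of_surp {S : Set (Fin n → DR)} {v y : Fin n → DR}
    (h0 : (0 : Fin n → DR) ∈ S) (hy : y ∈ span DR S) (h : GhostSurpVec v y) : SpannedBy S v :=
  (spannedBy_or_ghostVec_of_surp hy h).elim id (spannedBy_of_ghostVec h0)

theorem exists_surp_mem_span_of_mem_span {S T : Set (Fin n → DR)} {x : Fin n → DR}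
    (hT : ∀ t ∈ T, ∃ y ∈ span DR S, GhostSurpVec t y) (hx : x ∈ span DR T) :
    ∃ y ∈ span DR S, GhostSurpVec x y := by
  induction hx using span_induction with
  | mem t ht => exact hT t ht
  | zero => exact ⟨0, zero_mem _, .refl 0⟩
  | add x x' _ _ hx hx' =>
    obtain ⟨y, hy, hxy⟩ := hx
    obtain ⟨y', hy', hxy'⟩ := hx'
    exact ⟨y + y', add_mem hy hy', hxy.add hxy'⟩
  | smul c x _ hx =>
    obtain ⟨y, hy, hxy⟩ := hx
    exact ⟨c • y, smul_mem _ c hy, hxy.smul c⟩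

theorem SpannedBy.exists_surp_smul_add {S : Set (Fin n → DR)} {v s : Fin n → DR}
    (h : SpannedBy S v) (hs : s ∈ S) :
    ∃ b : DR, ∃ r ∈ span DR (S \ {s}), GhostSurpVec v (b • s + r) := by
  obtain ⟨y, hy, hvy⟩ := h.exists_surp_mem_span
  rw [← Set.insert_eq_of_mem hs, ← Set.insert_sdiff_singleton, mem_span_insert] at hy
  obtain ⟨b, r, hr, rfl⟩ := hy
  exact ⟨b, r, hr, hvy⟩

theorem mem_of_spannedBy_zero {S : Set (Fin n → DR)} (h : SpannedBy S 0) :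
    (0 : Fin n → DR) ∈ S := by
  classical
  obtain ⟨I, hIS, ⟨w, hw⟩, α, hα, h0⟩ := spannedBy_iff.1 h
  rw [← Finset.add_sum_erase I _ hw] at h0
  have hαw : (0 : Fin n → DR) = α w • w :=
    h0.antisymm (by simpa using GhostSurpVec.refl (α w • w))
  rw [eq_comm, smul_eq_zero_iff_right_of_ne_zero (hα w hw).ne_zero] at hαw
  exact hαw ▸ hIS hw

end Vectors

namespace IsSBase

open Submodule

variable {n : ℕ} {V S S' : Set (Fin n → DR)}

theorem zero_mem (hS : IsSBase V S) (hV : (0 : Fin n → DR) ∈ V) : (0 : Fin n → DR) ∈ S :=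
  mem_of_spannedBy_zero (hS.2.1 0 hV)

theorem not_surp_of_mem_span (hS : IsSBase V S) (hV : (0 : Fin n → DR) ∈ V)
    {s y : Fin n → DR} (hs : s ∈ S) (hs0 : s ≠ 0) (hy : y ∈ span DR (S \ {s})) :
    ¬ GhostSurpVec s y := by
  intro hsy
  have hspan : TropSpans (S \ {s}) V := by
    intro v hv
    obtain ⟨x, hx, hvx⟩ := (hS.2.1 v hv).exists_surp_mem_span
    have hS_surp : ∀ t ∈ S, ∃ y ∈ span DR (S \ {s}), GhostSurpVec t y := by
      intro t ht
      by_cases hts : t = s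
      · exact ⟨y, hy, hts ▸ hsy⟩
      · exact ⟨t, subset_span ⟨ht, hts⟩, .refl t⟩
    obtain ⟨y', hy', hxy'⟩ := exists_surp_mem_span_of_mem_span hS_surp hx
    exact spannedBy_of_surp ⟨hS.zero_mem hV, Ne.symm hs0⟩ hy' (hvx.trans hxy')
  exact hS.2.2 _ (Set.sdiff_singleton_ssubset.2 hs) hspan

theorem smul_eq_self_of_smul_mem (hS : IsSBase V S) (hV : (0 : Fin n → DR) ∈ V)
    {s : Fin n → DR} {γ : DR} (hs : s ∈ S) (hγ : γ ≠ 0) (hγs : γ • s ∈ S) : γ • s = s := by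
  by_contra hne
  have hs0 : s ≠ 0 := by
    rintro rfl
    exact hne (smul_zero γ)
  have hγs0 : γ • s ≠ 0 := (smul_eq_zero_iff_right_of_ne_zero hγ).not.2 hs0
  exact hS.not_surp_of_mem_span hV hγs hγs0
    (smul_mem _ γ (subset_span ⟨hs, fun h => hne (Set.mem_singleton_iff.1 h).symm⟩)) (.refl _)

theorem exists_smul_mem (hS : IsSBase V S) (hS' : IsSBase V S') (hV : (0 : Fin n → DR) ∈ V)
    {s : Fin n → DR} (hs : s ∈ S) : ∃ b : DR, Tangible b ∧ b • s ∈ S' := by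
  classical
  by_cases hs0 : s = 0
  · exact ⟨1, DR.tangible_one, by simpa [hs0] using hS'.zero_mem hV⟩
  obtain ⟨I, hIS', -, α, -, hsI⟩ := spannedBy_iff.1 (hS'.2.1 s (hS.1 hs))
  have hI : ∀ w ∈ I, ∃ b : DR, ∃ r ∈ span DR (S \ {s}), GhostSurpVec w (b • s + r) :=
    fun w hw => (hS.2.1 w (hS'.1 (hIS' hw))).exists_surp_smul_add hs
  choose! b r hr hwr using hI
  have hsum : ∑ w ∈ I, α w * b w = 1 := by
    by_contra hne
    refine hS.not_surp_of_mem_span hV hs hs0 (sum_mem fun w hw => smul_mem _ (α w) (hr w hw))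
      (GhostSurpVec.of_smul_add hne ?_)
    simpa [smul_add, Finset.sum_add_distrib, smul_smul, Finset.sum_smul] using
      hsI.trans (GhostSurpVec.sum fun w hw => (hwr w hw).smul (α w))
  obtain ⟨w₀, hw₀, hab⟩ := DR.exists_eq_of_sum_eq DR.tangible_one hsum
  have hsw : s = α w₀ • w₀ := by
    refine GhostSurpVec.antisymm (z := ∑ w ∈ I.erase w₀, α w • w) (w := α w₀ • r w₀) ?_ ?_
    · rwa [Finset.add_sum_erase I (fun w => α w • w) hw₀]
    · simpa [smul_add, smul_smul, hab] using (hwr w₀ hw₀).smul (α w₀)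
  refine ⟨b w₀, DR.tangible_of_mul_eq_one hab, ?_⟩
  rw [hsw, smul_smul, mul_comm, hab, one_smul]
  exact hIS' hw₀

end IsSBase

/-- The s-base of a supertropical vector space is unique up to multiplication by
tangible scalars. -/
theorem sbase_unique_up_to_scalars (n : ℕ) (V : Submodule DR (Fin n → DR))
    (S S' : Set (Fin n → DR)) (h : IsSBase (V : Set (Fin n → DR)) S)
    (h' : IsSBase (V : Set (Fin n → DR)) S') :
    ∃ σ : S → S', Function.Bijective σ ∧
      ∀ s : S, ∃ α : DR, Tangible α ∧ (σ s : Fin n → DR) = α • (s : Fin n → DR) := by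
  choose b hb hbS' using fun s : S => h.exists_smul_mem h' V.zero_mem s.2
  choose b' hb' hb'S using fun s : S' => h'.exists_smul_mem h V.zero_mem s.2
  let σ : S → S' := fun s => ⟨b s • s, hbS' s⟩
  let τ : S' → S := fun s => ⟨b' s • s, hb'S s⟩
  have hστ : ∀ s : S, τ (σ s) = s := fun s => Subtype.ext <| by
    have hmem := (τ (σ s)).2
    simp only [σ, τ, smul_smul] at hmem ⊢
    exact h.smul_eq_self_of_smul_mem V.zero_mem s.2
      (mul_ne_zero (hb' (σ s)).ne_zero (hb s).ne_zero) hmem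
  have hτσ : ∀ s : S', σ (τ s) = s := fun s => Subtype.ext <| by
    have hmem := (σ (τ s)).2
    simp only [σ, τ, smul_smul] at hmem ⊢
    exact h'.smul_eq_self_of_smul_mem V.zero_mem s.2
      (mul_ne_zero (hb (τ s)).ne_zero (hb' s).ne_zero) hmem
  exact ⟨σ, Function.bijective_iff_has_inverse.2 ⟨τ, hστ, hτσ⟩, fun s => ⟨b s, hb s, rfl⟩⟩
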